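/- For a rigged hypersurface, the rigged covariant derivative of the first fundamental form satisfies ∇̄_c ḡ_{ab} + ℓ_b K_{ca} + ℓ_a K_{cb} = 0, where ḡ is the pullback of the ambient metric, K the second fundamental form, and ℓ_a = g(ℓ, e_a). -/

import Mathlib

noncomputable section

/-- Partial derivative in the `a`-th coordinate direction on `ℝ³`. -/
def pd (f : (Fin 3 → ℝ) → ℝ) (a : Fin 3) (ξ : Fin 3 → ℝ) : ℝ :=
  fderiv ℝ f ξ (Pi.single a 1)

/-- Ambient covariant derivative along `e a` of an ambient vector field along Σ. -/
def cov (Ch : (Fin 3 → ℝ) → Fin 4 → Fin 4 → Fin 4 → ℝ)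
    (e : Fin 3 → (Fin 3 → ℝ) → Fin 4 → ℝ)
    (a : Fin 3) (V : (Fin 3 → ℝ) → Fin 4 → ℝ) (ξ : Fin 3 → ℝ) (μ : Fin 4) : ℝ :=
  pd (fun ζ => V ζ μ) a ξ + ∑ ν, ∑ ρ, Ch ξ μ ν ρ * e a ξ ν * V ξ ρ

/-- Christoffel symbols `Γ̄^c_{ba} = ω^c(∇_{e_a} e_b)` of the rigged connection. -/
def Gbar (Ch : (Fin 3 → ℝ) → Fin 4 → Fin 4 → Fin 4 → ℝ)
    (e : Fin 3 → (Fin 3 → ℝ) → Fin 4 → ℝ)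
    (ω : Fin 3 → (Fin 3 → ℝ) → Fin 4 → ℝ)
    (c b a : Fin 3) (ξ : Fin 3 → ℝ) : ℝ :=
  ∑ μ, ω c ξ μ * cov Ch e a (e b) ξ μ

/-- Second fundamental form `K_{ab} = -n(∇_{e_a} e_b)`. -/
def sff (Ch : (Fin 3 → ℝ) → Fin 4 → Fin 4 → Fin 4 → ℝ)
    (e : Fin 3 → (Fin 3 → ℝ) → Fin 4 → ℝ)
    (n : (Fin 3 → ℝ) → Fin 4 → ℝ) (a b : Fin 3) (ξ : Fin 3 → ℝ) : ℝ :=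
  -∑ μ, n ξ μ * cov Ch e a (e b) ξ μ

/-- Rigged covariant derivative `(∇̄_c K)_{ab}` of a 2-covariant tensor on Σ. -/
def DbarT2 (Cb : (Fin 3 → ℝ) → Fin 3 → Fin 3 → Fin 3 → ℝ)
    (K : (Fin 3 → ℝ) → Fin 3 → Fin 3 → ℝ) (c a b : Fin 3) (ξ : Fin 3 → ℝ) : ℝ :=
  pd (fun ζ => K ζ a b) c ξ - (∑ f, Cb ξ f a c * K ξ f b)
    - ∑ f, Cb ξ f b c * K ξ a f

lemma pd_mul {f h : (Fin 3 → ℝ) → ℝ} {ξ : Fin 3 → ℝ} (hf : DifferentiableAt ℝ f ξ)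
    (hh : DifferentiableAt ℝ h ξ) (a : Fin 3) :
    pd (fun ζ => f ζ * h ζ) a ξ = pd f a ξ * h ξ + f ξ * pd h a ξ := by
  unfold pd
  rw [fderiv_fun_mul hf hh]
  simp only [ContinuousLinearMap.add_apply, ContinuousLinearMap.smul_apply, smul_eq_mul]
  ring

lemma pd_sum {ι : Type*} (s : Finset ι) (f : ι → (Fin 3 → ℝ) → ℝ) {ξ : Fin 3 → ℝ}
    (hf : ∀ i ∈ s, DifferentiableAt ℝ (f i) ξ) (a : Fin 3) :
    pd (fun ζ => ∑ i ∈ s, f i ζ) a ξ = ∑ i ∈ s, pd (f i) a ξ := by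
  unfold pd
  rw [fderiv_fun_sum hf]
  simp

/-- Completeness decomposition of the ambient covariant derivative of a frame field. -/
lemma decomp (Ch : (Fin 3 → ℝ) → Fin 4 → Fin 4 → Fin 4 → ℝ)
    (e : Fin 3 → (Fin 3 → ℝ) → Fin 4 → ℝ)
    (ℓ n : (Fin 3 → ℝ) → Fin 4 → ℝ)
    (ω : Fin 3 → (Fin 3 → ℝ) → Fin 4 → ℝ)
    (hcomp : ∀ ξ μ ν, ℓ ξ μ * n ξ ν + ∑ a, e a ξ μ * ω a ξ ν
      = if μ = ν then (1 : ℝ) else 0)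
    (ξ : Fin 3 → ℝ) (c a : Fin 3) (μ : Fin 4) :
    cov Ch e c (e a) ξ μ
      = (∑ f, Gbar Ch e ω f a c ξ * e f ξ μ) - sff Ch e n c a ξ * ℓ ξ μ := by
  have h0 : cov Ch e c (e a) ξ μ
      = ∑ ν, (if μ = ν then (1:ℝ) else 0) * cov Ch e c (e a) ξ ν := by
    simp
  have hcomp' : ∀ ν : Fin 4, (if μ = ν then (1:ℝ) else 0)
      = ℓ ξ μ * n ξ ν + ∑ f, e f ξ μ * ω f ξ ν := fun ν => (hcomp ξ μ ν).symm
  rw [h0]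
  simp only [hcomp', Gbar, sff]
  simp only [Fin.sum_univ_four, Fin.sum_univ_three]
  ring

/-- Metric compatibility along Σ. -/
lemma metcompat (Ch : (Fin 3 → ℝ) → Fin 4 → Fin 4 → Fin 4 → ℝ)
    (g : (Fin 3 → ℝ) → Fin 4 → Fin 4 → ℝ)
    (e : Fin 3 → (Fin 3 → ℝ) → Fin 4 → ℝ)
    (hChsym : ∀ ξ α β γ, Ch ξ α β γ = Ch ξ α γ β)
    (hmet : ∀ ξ a μ ν, pd (fun ζ => g ζ μ ν) a ξ
      = (∑ ρ, (∑ σ, Ch ξ ρ μ σ * e a ξ σ) * g ξ ρ ν)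
        + ∑ ρ, (∑ σ, Ch ξ ρ ν σ * e a ξ σ) * g ξ μ ρ)
    (he : ∀ a μ, ContDiff ℝ (⊤ : ℕ∞) (fun ζ => e a ζ μ))
    (hgs : ∀ μ ν, ContDiff ℝ (⊤ : ℕ∞) (fun ζ => g ζ μ ν))
    (ξ : Fin 3 → ℝ) (a b c : Fin 3) :
    pd (fun ζ => ∑ μ, ∑ ν, g ζ μ ν * e a ζ μ * e b ζ ν) c ξ
      = (∑ μ, ∑ ν, g ξ μ ν * cov Ch e c (e a) ξ μ * e b ξ ν)
        + ∑ μ, ∑ ν, g ξ μ ν * e a ξ μ * cov Ch e c (e b) ξ ν := by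
  have hde : ∀ (x : Fin 3) μ, DifferentiableAt ℝ (fun ζ => e x ζ μ) ξ :=
    fun x μ => ((he x μ).differentiable (by simp)).differentiableAt
  have hdg : ∀ μ ν, DifferentiableAt ℝ (fun ζ => g ζ μ ν) ξ :=
    fun μ ν => ((hgs μ ν).differentiable (by simp)).differentiableAt
  have key : ∀ (μ ν : Fin 4), pd (fun ζ => g ζ μ ν * e a ζ μ * e b ζ ν) c ξ
      = pd (fun ζ => g ζ μ ν) c ξ * e a ξ μ * e b ξ ν
        + g ξ μ ν * pd (fun ζ => e a ζ μ) c ξ * e b ξ ν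
        + g ξ μ ν * e a ξ μ * pd (fun ζ => e b ζ ν) c ξ := by
    intro μ ν
    rw [pd_mul ((hdg μ ν).fun_mul (hde a μ)) (hde b ν), pd_mul (hdg μ ν) (hde a μ)]
    ring
  have step : pd (fun ζ => ∑ μ, ∑ ν, g ζ μ ν * e a ζ μ * e b ζ ν) c ξ
      = ∑ μ, ∑ ν, (pd (fun ζ => g ζ μ ν) c ξ * e a ξ μ * e b ξ ν
        + g ξ μ ν * pd (fun ζ => e a ζ μ) c ξ * e b ξ ν
        + g ξ μ ν * e a ξ μ * pd (fun ζ => e b ζ ν) c ξ) := by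
    rw [pd_sum Finset.univ (fun μ => fun ζ => ∑ ν, g ζ μ ν * e a ζ μ * e b ζ ν)
      (fun μ _ => DifferentiableAt.fun_sum (fun ν _ => ((hdg μ ν).fun_mul (hde a μ)).fun_mul (hde b ν)))]
    exact Finset.sum_congr rfl fun μ _ => by
      rw [pd_sum Finset.univ (fun ν => fun ζ => g ζ μ ν * e a ζ μ * e b ζ ν)
        (fun ν _ => ((hdg μ ν).fun_mul (hde a μ)).fun_mul (hde b ν))]
      exact Finset.sum_congr rfl fun ν _ => key μ ν
  have hmet' : ∀ (μ ν : Fin 4), pd (fun ζ => g ζ μ ν) c ξ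
      = (∑ ρ, (∑ σ, Ch ξ ρ σ μ * e c ξ σ) * g ξ ρ ν)
        + ∑ ρ, (∑ σ, Ch ξ ρ σ ν * e c ξ σ) * g ξ μ ρ := by
    intro μ ν
    rw [hmet ξ c μ ν]
    congr 1 <;> refine Finset.sum_congr rfl fun ρ _ => ?_ <;>
      · congr 1
        refine Finset.sum_congr rfl fun σ _ => ?_
        rw [hChsym]
  rw [step]
  simp only [hmet', cov]
  set_option maxRecDepth 10000 in
  set_option maxHeartbeats 2000000 in
  simp only [Fin.sum_univ_four]
  set_option maxRecDepth 10000 in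
  set_option maxHeartbeats 4000000 in
  ring

/-- For a rigged hypersurface, the rigged covariant derivative of
the first fundamental form `ḡ_{ab} = g(e_a,e_b)` satisfies
`∇̄_c ḡ_{ab} + ℓ_b K_{ca} + ℓ_a K_{cb} = 0`, where `ℓ_a = g(ℓ, e_a)`. -/
theorem stmt8
    (Ch : (Fin 3 → ℝ) → Fin 4 → Fin 4 → Fin 4 → ℝ)
    (g : (Fin 3 → ℝ) → Fin 4 → Fin 4 → ℝ)
    (e : Fin 3 → (Fin 3 → ℝ) → Fin 4 → ℝ)
    (ℓ n : (Fin 3 → ℝ) → Fin 4 → ℝ)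
    (ω : Fin 3 → (Fin 3 → ℝ) → Fin 4 → ℝ)
    (hChsym : ∀ ξ α β γ, Ch ξ α β γ = Ch ξ α γ β)
    (hgsym : ∀ ξ μ ν, g ξ μ ν = g ξ ν μ)
    (hmet : ∀ ξ a μ ν, pd (fun ζ => g ζ μ ν) a ξ
      = (∑ ρ, (∑ σ, Ch ξ ρ μ σ * e a ξ σ) * g ξ ρ ν)
        + ∑ ρ, (∑ σ, Ch ξ ρ ν σ * e a ξ σ) * g ξ μ ρ)
    (hesym : ∀ ξ a b μ, pd (fun ζ => e b ζ μ) a ξ = pd (fun ζ => e a ζ μ) b ξ)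
    (he : ∀ a μ, ContDiff ℝ (⊤ : ℕ∞) (fun ζ => e a ζ μ))
    (hgs : ∀ μ ν, ContDiff ℝ (⊤ : ℕ∞) (fun ζ => g ζ μ ν))
    (hℓs : ∀ μ, ContDiff ℝ (⊤ : ℕ∞) (fun ζ => ℓ ζ μ))
    (hne : ∀ ξ a, ∑ μ, n ξ μ * e a ξ μ = 0)
    (hnl : ∀ ξ, ∑ μ, n ξ μ * ℓ ξ μ = 1)
    (hωl : ∀ ξ a, ∑ μ, ω a ξ μ * ℓ ξ μ = 0)
    (hωe : ∀ ξ a b, ∑ μ, ω a ξ μ * e b ξ μ = if a = b then (1 : ℝ) else 0)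
    (hcomp : ∀ ξ μ ν, ℓ ξ μ * n ξ ν + ∑ a, e a ξ μ * ω a ξ ν
      = if μ = ν then (1 : ℝ) else 0) :
    ∀ ξ (a b c : Fin 3),
      DbarT2 (fun ζ x y z => Gbar Ch e ω x y z ζ)
          (fun ζ x y => ∑ μ, ∑ ν, g ζ μ ν * e x ζ μ * e y ζ ν) c a b ξ
        + (∑ μ, ∑ ν, g ξ μ ν * ℓ ξ μ * e b ξ ν) * sff Ch e n c a ξ
        + (∑ μ, ∑ ν, g ξ μ ν * ℓ ξ μ * e a ξ ν) * sff Ch e n c b ξ = 0 := by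
  intro ξ a b c
  have hsw : ∀ x : Fin 3, ∑ μ, ∑ ν, g ξ μ ν * e x ξ μ * ℓ ξ ν
      = ∑ μ, ∑ ν, g ξ μ ν * ℓ ξ μ * e x ξ ν := by
    intro x
    rw [Finset.sum_comm]
    refine Finset.sum_congr rfl fun μ _ => Finset.sum_congr rfl fun ν _ => ?_
    rw [hgsym]; ring
  have hswa := hsw a
  simp only [DbarT2]
  rw [metcompat Ch g e hChsym hmet he hgs ξ a b c]
  have hdec := decomp Ch e ℓ n ω hcomp ξ
  simp only [hdec]
  set_option maxRecDepth 10000 in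
  set_option maxHeartbeats 2000000 in
  simp only [Fin.sum_univ_four, Fin.sum_univ_three] at hswa ⊢
  set_option maxRecDepth 10000 in
  set_option maxHeartbeats 4000000 in
  linear_combination (-sff Ch e n c b ξ) * hswa

end
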